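/- If (E, R₀) is a minimal counterexample for the abstraction A = M/≡ and safety formula ψ_S, and (E, R₀) is valid and consistent with (M, ≡) with validating simulation R, then α∘R = R₀ exactly, where α is the abstraction relation {(q, [q]_≡)}. -/

import Mathlib

open Classical
attribute [local instance 10] Classical.propDecidable

noncomputable section

universe u v w

/-- A sub-probability measure on a finite set `Q`. -/
structure SubProb (Q : Type u) [Fintype Q] where
  val : Q → ℝ
  nonneg : ∀ q, 0 ≤ val q
  sum_le_one : ∑ q, val q ≤ 1

namespace SubProb

variable {Q : Type u} {Q' : Type v} [Fintype Q] [Fintype Q']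

/-- The measure of a set of states. -/
def mass (μ : SubProb Q) (A : Set Q) : ℝ := ∑ q, A.indicator μ.val q

/-- The zero sub-probability measure. -/
def zero (Q : Type u) [Fintype Q] : SubProb Q :=
  ⟨fun _ => 0, fun _ => le_refl 0, by simp⟩

/-- Extension (by zero) of a sub-probability measure to a disjoint sum (left). -/
def toLeft (μ : SubProb Q) : SubProb (Q ⊕ Q') where
  val := Sum.elim μ.val fun _ => 0
  nonneg := by rintro (q | q); exacts [μ.nonneg q, le_refl 0]
  sum_le_one := by simpa [Fintype.sum_sum_type] using μ.sum_le_one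

/-- Extension (by zero) of a sub-probability measure to a disjoint sum (right). -/
def toRight (μ : SubProb Q') : SubProb (Q ⊕ Q') where
  val := Sum.elim (fun _ => 0) μ.val
  nonneg := by rintro (q | q); exacts [le_refl 0, μ.nonneg q]
  sum_le_one := by simpa [Fintype.sum_sum_type] using μ.sum_le_one

end SubProb

/-- The image of a set under a binary relation. -/
def relImage {A : Type u} {B : Type v} (R : A → B → Prop) (S : Set A) : Set B :=
  {b | ∃ a ∈ S, R a b}

/-- A set is `R`-closed if its image under `R` is itself. -/
def RClosed {Q : Type u} (R : Q → Q → Prop) (A : Set Q) : Prop := relImage R A = A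

/-- `μ ≼_R μ'` : `μ'` simulates `μ` with respect to `R`. -/
def SubProb.simLE {Q : Type u} [Fintype Q] (R : Q → Q → Prop) (μ μ' : SubProb Q) : Prop :=
  ∀ A : Set Q, RClosed R A → μ.mass A ≤ μ'.mass A

/-- `μ ≈_R μ'` : `μ` is equivalent to `μ'` with respect to `R`. -/
def SubProb.simEq {Q : Type u} [Fintype Q] (R : Q → Q → Prop) (μ μ' : SubProb Q) : Prop :=
  ∀ A : Set Q, RClosed R A → μ.mass A = μ'.mass A

/-- A (finite) Markov decision process over atomic propositions `AP`. -/
structure MDP (Q : Type u) [Fintype Q] (AP : Type w) where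
  init : Q
  trans : Q → Finset (SubProb Q)
  trans_nonempty : ∀ q, (trans q).Nonempty
  label : Q → Set AP

variable {Q : Type u} {Q' : Type v} {AP : Type w} [Fintype Q] [Fintype Q']

/-- A simulation relation on (the state space of) an MDP: a preorder such that related
states have the same labels and every transition of the smaller state is simulated. -/
def IsSimulation (M : MDP Q AP) (R : Q → Q → Prop) : Prop :=
  Reflexive R ∧ Transitive R ∧
    ∀ q q', R q q' → M.label q = M.label q' ∧
      ∀ μ ∈ M.trans q, ∃ μ' ∈ M.trans q', SubProb.simLE R μ μ'

/-- A bisimulation on (the state space of) an MDP. -/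
def IsBisimulation (M : MDP Q AP) (R : Q → Q → Prop) : Prop :=
  Equivalence R ∧
    ∀ q q', R q q' → M.label q = M.label q' ∧
      ∀ μ ∈ M.trans q, ∃ μ' ∈ M.trans q', SubProb.simEq R μ μ'

/-- The direct sum of two MDPs (with the initial state of the first as initial state). -/
def MDP.dsum (M : MDP Q AP) (M' : MDP Q' AP) : MDP (Q ⊕ Q') AP where
  init := Sum.inl M.init
  trans := fun x =>
    match x with
    | .inl q => (M.trans q).image SubProb.toLeft
    | .inr q => (M'.trans q).image SubProb.toRight
  trans_nonempty := by
    rintro (q | q)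
    · exact (M.trans_nonempty q).image _
    · exact (M'.trans_nonempty q).image _
  label := Sum.elim M.label M'.label

/-- `M ≼ M'` : the MDP `M'` simulates the MDP `M`. -/
def MDP.Sim (M : MDP Q AP) (M' : MDP Q' AP) : Prop :=
  ∃ R : (Q ⊕ Q') → (Q ⊕ Q') → Prop,
    IsSimulation (M.dsum M') R ∧ R (Sum.inl M.init) (Sum.inr M'.init)

/-- `M ≈ M'` : the MDPs `M` and `M'` are bisimilar. -/
def MDP.Bisim (M : MDP Q AP) (M' : MDP Q' AP) : Prop :=
  ∃ R : (Q ⊕ Q') → (Q ⊕ Q') → Prop,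
    IsBisimulation (M.dsum M') R ∧ R (Sum.inl M.init) (Sum.inr M'.init)

/-- The canonical-form relation `id_Q ∪ R₁ ∪ id_{Q'}` on a disjoint sum. -/
def canonRel (R₁ : Q → Q' → Prop) : (Q ⊕ Q') → (Q ⊕ Q') → Prop
  | .inl a, .inl b => a = b
  | .inl a, .inr b => R₁ a b
  | .inr _, .inl _ => False
  | .inr a, .inr b => a = b

/-- `R₁ ⊆ Q × Q'` is a canonical simulation of `M` by `M'`. -/
def IsCanonSim (M : MDP Q AP) (M' : MDP Q' AP) (R₁ : Q → Q' → Prop) : Prop :=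
  IsSimulation (M.dsum M') (canonRel R₁)

/-- The edge relation of the unlabeled underlying graph of an MDP. -/
def MDP.edge (M : MDP Q AP) (q₁ q₂ : Q) : Prop :=
  ∃ μ ∈ M.trans q₁, 0 < μ.val q₂

/-- A sub-probability measure on `Q` viewed as a measure on `Q × Fin (k+1)`
concentrated on level `j`. -/
def SubProb.toLevel {k : ℕ} (μ : SubProb Q) (j : Fin (k + 1)) : SubProb (Q × Fin (k + 1)) where
  val := fun x => if x.2 = j then μ.val x.1 else 0
  nonneg := by
    intro x; (try dsimp only); split
    · exact μ.nonneg x.1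
    · exact le_refl 0
  sum_le_one := by
    rw [Fintype.sum_prod_type]
    simpa using μ.sum_le_one

/-- The `k`-th unrolling of an MDP rooted at `q`. States at level `j+1` transition to the
corresponding states at level `j`; states at level `0` have only the zero transition. -/
def MDP.unroll (M : MDP Q AP) (q : Q) (k : ℕ) : MDP (Q × Fin (k + 1)) AP where
  init := (q, Fin.last k)
  trans := fun x =>
    if h : (x.2 : ℕ) = 0 then {SubProb.zero _}
    else (M.trans x.1).image fun μ =>
      μ.toLevel ⟨(x.2 : ℕ) - 1, Nat.lt_of_le_of_lt (Nat.sub_le _ _) x.2.isLt⟩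
  trans_nonempty := by
    intro x; (try dsimp only); split
    · simp
    · exact (M.trans_nonempty x.1).image _
  label := fun x => M.label x.1
mutual
/-- The safety fragment of PCTL. -/
inductive SafeF (AP : Type w) : Type w
  | tt : SafeF AP
  | ff : SafeF AP
  | atom : AP → SafeF AP
  | natom : AP → SafeF AP
  | and : SafeF AP → SafeF AP → SafeF AP
  | or : SafeF AP → SafeF AP → SafeF AP
  | pnextLt : (p : ℚ) → 0 ≤ p → p ≤ 1 → LiveF AP → SafeF AP
  | pnextLe : (p : ℚ) → 0 ≤ p → p ≤ 1 → LiveF AP → SafeF AP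
  | puntilLt : (p : ℚ) → 0 ≤ p → p ≤ 1 → LiveF AP → LiveF AP → SafeF AP
  | puntilLe : (p : ℚ) → 0 ≤ p → p ≤ 1 → LiveF AP → LiveF AP → SafeF AP

/-- The liveness fragment of PCTL. -/
inductive LiveF (AP : Type w) : Type w
  | tt : LiveF AP
  | ff : LiveF AP
  | atom : AP → LiveF AP
  | natom : AP → LiveF AP
  | and : LiveF AP → LiveF AP → LiveF AP
  | or : LiveF AP → LiveF AP → LiveF AP
  | nnextLt : (p : ℚ) → 0 ≤ p → p ≤ 1 → LiveF AP → LiveF AP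
  | nnextLe : (p : ℚ) → 0 ≤ p → p ≤ 1 → LiveF AP → LiveF AP
  | nuntilLt : (p : ℚ) → 0 ≤ p → p ≤ 1 → LiveF AP → LiveF AP → LiveF AP
  | nuntilLe : (p : ℚ) → 0 ≤ p → p ≤ 1 → LiveF AP → LiveF AP → LiveF AP
end

/-- A (history-dependent) scheduler for an MDP. -/
structure Sched (M : MDP Q AP) where
  choice : List Q → Q → SubProb Q
  valid : ∀ h q, choice h q ∈ M.trans q

/-- The probability, under scheduler `σ` with current history `h`, that an until property
`s1 U s2` is satisfied from `q` within `n` steps. -/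
def untilProbN (M : MDP Q AP) (σ : Sched M) (s1 s2 : Set Q) : ℕ → List Q → Q → ℝ
  | 0, _, q => if q ∈ s2 then 1 else 0
  | n + 1, h, q =>
    if q ∈ s2 then 1
    else if q ∈ s1 then
      ∑ q', (σ.choice h q).val q' * untilProbN M σ s1 s2 n (h ++ [q]) q'
    else 0

/-- The probability under scheduler `σ` that `s1 U s2` is satisfied from `q`. -/
def untilProb (M : MDP Q AP) (σ : Sched M) (s1 s2 : Set Q) (q : Q) : ℝ :=
  ⨆ n : ℕ, untilProbN M σ s1 s2 n [] q

mutual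
/-- Satisfaction of safety formulas at a state of an MDP (under all schedulers). -/
def satS (M : MDP Q AP) : SafeF AP → Q → Prop
  | .tt, _ => True
  | .ff, _ => False
  | .atom a, q => a ∈ M.label q
  | .natom a, q => a ∉ M.label q
  | .and φ ψ, q => satS M φ q ∧ satS M ψ q
  | .or φ ψ, q => satS M φ q ∨ satS M ψ q
  | .pnextLt p _ _ ψ, q => ∀ μ ∈ M.trans q, μ.mass {q' | satL M ψ q'} < (p : ℝ)
  | .pnextLe p _ _ ψ, q => ∀ μ ∈ M.trans q, μ.mass {q' | satL M ψ q'} ≤ (p : ℝ)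
  | .puntilLt p _ _ ψ1 ψ2, q =>
    ∀ σ : Sched M, untilProb M σ {q' | satL M ψ1 q'} {q' | satL M ψ2 q'} q < (p : ℝ)
  | .puntilLe p _ _ ψ1 ψ2, q =>
    ∀ σ : Sched M, untilProb M σ {q' | satL M ψ1 q'} {q' | satL M ψ2 q'} q ≤ (p : ℝ)

/-- Satisfaction of liveness formulas at a state of an MDP. -/
def satL (M : MDP Q AP) : LiveF AP → Q → Prop
  | .tt, _ => True
  | .ff, _ => False
  | .atom a, q => a ∈ M.label q
  | .natom a, q => a ∉ M.label q
  | .and φ ψ, q => satL M φ q ∧ satL M ψ q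
  | .or φ ψ, q => satL M φ q ∨ satL M ψ q
  | .nnextLt p _ _ ψ, q => ¬ ∀ μ ∈ M.trans q, μ.mass {q' | satL M ψ q'} < (p : ℝ)
  | .nnextLe p _ _ ψ, q => ¬ ∀ μ ∈ M.trans q, μ.mass {q' | satL M ψ q'} ≤ (p : ℝ)
  | .nuntilLt p _ _ ψ1 ψ2, q =>
    ¬ ∀ σ : Sched M, untilProb M σ {q' | satL M ψ1 q'} {q' | satL M ψ2 q'} q < (p : ℝ)
  | .nuntilLe p _ _ ψ1 ψ2, q =>
    ¬ ∀ σ : Sched M, untilProb M σ {q' | satL M ψ1 q'} {q' | satL M ψ2 q'} q ≤ (p : ℝ)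
end
mutual
/-- Weak safety formulas: safety formulas using only `≤` probability bounds. -/
def SafeF.weak : SafeF AP → Prop
  | .tt => True
  | .ff => True
  | .atom _ => True
  | .natom _ => True
  | .and φ ψ => φ.weak ∧ ψ.weak
  | .or φ ψ => φ.weak ∧ ψ.weak
  | .pnextLt _ _ _ _ => False
  | .pnextLe _ _ _ ψ => ψ.strict
  | .puntilLt _ _ _ _ _ => False
  | .puntilLe _ _ _ ψ1 ψ2 => ψ1.strict ∧ ψ2.strict

/-- Strict liveness formulas: liveness formulas using only `≤` probability bounds. -/
def LiveF.strict : LiveF AP → Prop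
  | .tt => True
  | .ff => True
  | .atom _ => True
  | .natom _ => True
  | .and φ ψ => φ.strict ∧ ψ.strict
  | .or φ ψ => φ.strict ∧ ψ.strict
  | .nnextLt _ _ _ _ => False
  | .nnextLe _ _ _ ψ => ψ.strict
  | .nuntilLt _ _ _ _ _ => False
  | .nuntilLe _ _ _ ψ1 ψ2 => ψ1.strict ∧ ψ2.strict
end

/-- An equivalence relation is compatible with an MDP if related states have equal labels. -/
def Compatible (M : MDP Q AP) (s : Setoid Q) : Prop :=
  ∀ q q', s.r q q' → M.label q = M.label q'

/-- The lifting of a sub-probability measure to the quotient: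
`[μ]([q]) = μ([q])`. -/
def SubProb.lift (s : Setoid Q) (μ : SubProb Q) : SubProb (Quotient s) where
  val := fun a => ∑ q, if Quotient.mk s q = a then μ.val q else 0
  nonneg := by
    intro a
    apply Finset.sum_nonneg
    intro q _
    split
    · exact μ.nonneg q
    · exact le_refl 0
  sum_le_one := by
    rw [Finset.sum_comm]
    simpa using μ.sum_le_one

/-- The abstract MDP of `M` with respect to an equivalence relation `s`. -/
def MDP.abst (M : MDP Q AP) (s : Setoid Q) : MDP (Quotient s) AP where
  init := Quotient.mk s M.init
  trans := fun a =>
    Finset.univ.biUnion fun q =>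
      if Quotient.mk s q = a then (M.trans q).image (SubProb.lift s) else ∅
  trans_nonempty := by
    intro a
    obtain ⟨q, rfl⟩ := Quotient.exists_rep a
    obtain ⟨μ, hμ⟩ := M.trans_nonempty q
    refine ⟨SubProb.lift s μ, Finset.mem_biUnion.2 ⟨q, Finset.mem_univ q, ?_⟩⟩
    rw [if_pos rfl]
    exact Finset.mem_image_of_mem _ hμ
  label := fun a => M.label a.out

/-- The abstraction relation `{(q, [q])}`. -/
def abstRel (s : Setoid Q) : Q → Quotient s → Prop := fun q a => Quotient.mk s q = a

/-- The refinement relation for `s' ⊆ s`: `[q]_{s'}` is related to `[q]_s` iff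
`[q]_{s'} ⊆ [q]_s`, equivalently they share a common element. -/
def refineRel (s' s : Setoid Q) : Quotient s' → Quotient s → Prop := fun a' a =>
  ∃ q : Q, Quotient.mk s' q = a' ∧ Quotient.mk s q = a

/-- `(E, R)` is a counterexample for the MDP `A` and safety formula `ψ`. -/
def IsCex {QA : Type v} [Fintype QA] (A : MDP QA AP) (ψ : SafeF AP) (E : MDP Q AP)
    (R : Q → QA → Prop) : Prop :=
  ¬ satS E ψ E.init ∧ IsCanonSim E A R

/-- Containment of MDPs (on a common state space): same initial state, same labels, and
each transition set injects into the corresponding one so that each transition agrees with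
its image except possibly being zero. -/
def MDPContained (M' M : MDP Q AP) : Prop :=
  M'.init = M.init ∧ (∀ q, M'.label q = M.label q) ∧
    ∀ q, ∃ f : SubProb Q → SubProb Q, Set.InjOn f (M'.trans q) ∧
      ∀ μ' ∈ M'.trans q, f μ' ∈ M.trans q ∧ ∀ q'', μ'.val q'' = (f μ').val q'' ∨ μ'.val q'' = 0

/-- A minimal counterexample. -/
def MinimalCex {QA : Type v} [Fintype QA] (A : MDP QA AP) (ψ : SafeF AP) (E : MDP Q AP)
    (R₀ : Q → QA → Prop) : Prop :=
  IsCex A ψ E R₀ ∧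
    (∀ (E₁ : MDP Q AP) (R₁ : Q → QA → Prop),
      IsCex A ψ E₁ R₁ → MDPContained E₁ E → E₁ = E) ∧
    (∀ R₁ : Q → QA → Prop,
      IsCex A ψ E R₁ → (∀ e a, R₁ e a → R₀ e a) → R₁ = R₀)

/-- The counterexample `(E, R₀)` for the abstraction `M/s` is valid and consistent with
`(M, s)`: there is a canonical (validating) simulation `R` of `E` by `M` with `α∘R ⊆ R₀`. -/
def ValidConsistent (M : MDP Q AP) (s : Setoid Q) {QE : Type v} [Fintype QE] (E : MDP QE AP)
    (R₀ : QE → Quotient s → Prop) : Prop :=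
  ∃ R : QE → Q → Prop, IsCanonSim E M R ∧ ∀ e q, R e q → R₀ e (Quotient.mk s q)

/-- The underlying graph of an MDP is a tree rooted at `r`. -/
def IsTreeGraph {V : Type u} (E : V → V → Prop) (r : V) : Prop :=
  (∀ q, ¬ E q r) ∧ (∀ q, q ≠ r → ∃! p, E p q) ∧ ∀ q, Relation.ReflTransGen E r q

/-!
Canonical simulations compose, and by compatibility of `≡` the abstraction relation `α` is a
canonical simulation of `M` by `M/≡`. Hence `α ∘ R` is a canonical simulation of `E` by `M/≡`,
so `(E, α ∘ R)` is again a counterexample; as `α ∘ R ⊆ R₀`, minimality of `R₀` forces equality.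
-/

namespace SubProb

theorem mass_mono (μ : SubProb Q) {A B : Set Q} (h : A ⊆ B) : μ.mass A ≤ μ.mass B :=
  Finset.sum_le_sum fun q _ => Set.indicator_le_indicator_of_subset h μ.nonneg q

theorem mass_toLeft (μ : SubProb Q) (C : Set (Q ⊕ Q')) :
    (μ.toLeft : SubProb (Q ⊕ Q')).mass C = μ.mass (Sum.inl ⁻¹' C) := by
  simp only [mass, toLeft, Fintype.sum_sum_type, Set.indicator_apply, Set.mem_preimage,
    Sum.elim_inl, Sum.elim_inr, ite_self, Finset.sum_const_zero, add_zero]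

theorem mass_toRight (μ : SubProb Q') (C : Set (Q ⊕ Q')) :
    (μ.toRight : SubProb (Q ⊕ Q')).mass C = μ.mass (Sum.inr ⁻¹' C) := by
  simp only [mass, toRight, Fintype.sum_sum_type, Set.indicator_apply, Set.mem_preimage,
    Sum.elim_inl, Sum.elim_inr, ite_self, Finset.sum_const_zero, zero_add]

theorem mass_lift (s : Setoid Q) (μ : SubProb Q) (B : Set (Quotient s)) :
    (μ.lift s).mass B = μ.mass (Quotient.mk s ⁻¹' B) := by
  simp only [mass, lift, Set.indicator_apply, Set.mem_preimage, ← Finset.sum_filter]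
  rw [Finset.sum_fiberwise_eq_sum_filter]
  simp only [Finset.mem_filter, Finset.mem_univ, true_and]

/-- `μ ≼_{R₁} ν` across two state spaces, phrased through pairs of sets instead of the
`canonRel R₁`-closed sets of the direct sum (see `simLE_canonRel_toLeft_toRight_iff`). -/
def simLEHet (R₁ : Q → Q' → Prop) (μ : SubProb Q) (ν : SubProb Q') : Prop :=
  ∀ (A : Set Q) (B : Set Q'), (∀ a b, R₁ a b → a ∈ A → b ∈ B) → μ.mass A ≤ ν.mass B

theorem simLEHet.comp {Q'' : Type*} [Fintype Q''] {R₁ : Q → Q' → Prop} {R₂ : Q' → Q'' → Prop}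
    {μ : SubProb Q} {μ' : SubProb Q'} {μ'' : SubProb Q''}
    (h₁ : μ.simLEHet R₁ μ') (h₂ : μ'.simLEHet R₂ μ'') :
    μ.simLEHet (Relation.Comp R₁ R₂) μ'' := fun A C hAC =>
  -- the middle set is the largest one whose `R₂`-image lies in `C`
  calc μ.mass A
      ≤ μ'.mass {b | ∀ c, R₂ b c → c ∈ C} :=
        h₁ _ _ fun a b hab ha c hbc => hAC a c ⟨b, hab, hbc⟩ ha
    _ ≤ μ''.mass C := h₂ _ _ fun _ c hbc hb => hb c hbc

end SubProb

theorem canonRel_refl {α β : Type*} (R₁ : α → β → Prop) : Reflexive (canonRel R₁) := by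
  rintro (_ | _) <;> rfl

theorem canonRel_trans {α β : Type*} (R₁ : α → β → Prop) : Transitive (canonRel R₁) := by
  rintro (a | a) (b | b) (c | c) h₁ h₂ <;> simp only [canonRel] at h₁ h₂ ⊢ <;> subst_vars <;>
    trivial

theorem rClosed_canonRel_iff {α β : Type*} {R₁ : α → β → Prop} {C : Set (α ⊕ β)} :
    RClosed (canonRel R₁) C ↔ ∀ a b, R₁ a b → Sum.inl a ∈ C → Sum.inr b ∈ C := by
  refine ⟨fun h a b hab ha => h ▸ ⟨Sum.inl a, ha, hab⟩, fun h => ?_⟩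
  refine Set.Subset.antisymm ?_ fun x hx => ⟨x, hx, canonRel_refl R₁ x⟩
  rintro (b | b) ⟨(a | a), ha, hab⟩
  exacts [hab ▸ ha, hab.elim, h a b hab ha, hab ▸ ha]

theorem simLE_canonRel_toLeft_toRight_iff {R₁ : Q → Q' → Prop} {μ : SubProb Q}
    {ν : SubProb Q'} :
    SubProb.simLE (canonRel R₁) μ.toLeft ν.toRight ↔ μ.simLEHet R₁ ν := by
  simp only [SubProb.simLE, rClosed_canonRel_iff, SubProb.mass_toLeft, SubProb.mass_toRight]
  exact ⟨fun h A B hAB => h (Sum.elim A B) hAB, fun h C hC => h _ _ hC⟩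

theorem isCanonSim_iff {M : MDP Q AP} {M' : MDP Q' AP} {R₁ : Q → Q' → Prop} :
    IsCanonSim M M' R₁ ↔ ∀ q q', R₁ q q' → M.label q = M'.label q' ∧
      ∀ μ ∈ M.trans q, ∃ ν ∈ M'.trans q', μ.simLEHet R₁ ν := by
  unfold IsCanonSim IsSimulation
  refine ⟨fun ⟨_, _, h⟩ q q' hqq' => ?_, fun h => ⟨canonRel_refl R₁, canonRel_trans R₁, ?_⟩⟩
  · obtain ⟨hlab, hstep⟩ := h (.inl q) (.inr q') hqq'
    refine ⟨hlab, fun μ hμ => ?_⟩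
    obtain ⟨_, hν', hμν⟩ := hstep μ.toLeft (Finset.mem_image_of_mem _ hμ)
    obtain ⟨ν, hν, rfl⟩ := Finset.mem_image.1 hν'
    exact ⟨ν, hν, simLE_canonRel_toLeft_toRight_iff.1 hμν⟩
  · have diag (x : Q ⊕ Q') : (M.dsum M').label x = (M.dsum M').label x ∧
        ∀ μ ∈ (M.dsum M').trans x, ∃ μ' ∈ (M.dsum M').trans x,
          SubProb.simLE (canonRel R₁) μ μ' :=
      ⟨rfl, fun μ hμ => ⟨μ, hμ, fun _ _ => le_rfl⟩⟩
    rintro (q | q) (q' | q') hqq'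
    · exact hqq' ▸ diag _
    · obtain ⟨hlab, hstep⟩ := h q q' hqq'
      refine ⟨hlab, fun μ' hμ' => ?_⟩
      obtain ⟨μ, hμ, rfl⟩ := Finset.mem_image.1 hμ'
      obtain ⟨ν, hν, hμν⟩ := hstep μ hμ
      exact ⟨ν.toRight, Finset.mem_image_of_mem _ hν, simLE_canonRel_toLeft_toRight_iff.2 hμν⟩
    · exact hqq'.elim
    · exact hqq' ▸ diag _

theorem IsCanonSim.comp {Q'' : Type*} [Fintype Q''] {M : MDP Q AP} {M' : MDP Q' AP}
    {M'' : MDP Q'' AP} {R₁ : Q → Q' → Prop} {R₂ : Q' → Q'' → Prop}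
    (h₁ : IsCanonSim M M' R₁) (h₂ : IsCanonSim M' M'' R₂) :
    IsCanonSim M M'' (Relation.Comp R₁ R₂) := by
  rw [isCanonSim_iff] at h₁ h₂ ⊢
  rintro q q'' ⟨q', hq, hq'⟩
  refine ⟨(h₁ q q' hq).1.trans (h₂ q' q'' hq').1, fun μ hμ => ?_⟩
  obtain ⟨μ', hμ', hμμ'⟩ := (h₁ q q' hq).2 μ hμ
  obtain ⟨μ'', hμ'', hμ'μ''⟩ := (h₂ q' q'' hq').2 μ' hμ'
  exact ⟨μ'', hμ'', hμμ'.comp hμ'μ''⟩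

theorem MDP.lift_mem_abst_trans (M : MDP Q AP) (s : Setoid Q) {q : Q} {μ : SubProb Q}
    (hμ : μ ∈ M.trans q) : μ.lift s ∈ (M.abst s).trans (Quotient.mk s q) :=
  Finset.mem_biUnion.2
    ⟨q, Finset.mem_univ q, by rw [if_pos rfl]; exact Finset.mem_image_of_mem _ hμ⟩

theorem isCanonSim_abstRel {M : MDP Q AP} {s : Setoid Q} (hcomp : Compatible M s) :
    IsCanonSim M (M.abst s) (abstRel s) := by
  rw [isCanonSim_iff]
  rintro q _ rfl
  refine ⟨(hcomp _ _ (Quotient.mk_out q)).symm, fun μ hμ => ?_⟩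
  refine ⟨μ.lift s, M.lift_mem_abst_trans s hμ, fun A B hAB => ?_⟩
  rw [SubProb.mass_lift]
  exact μ.mass_mono fun a ha => hAB a _ rfl ha

/-- For a minimal counterexample `(E, R₀)` of the abstraction `M/s` that is valid and
consistent with `(M, s)` via validating simulation `R`, we have `α ∘ R = R₀` exactly. -/
theorem stmt15 {Q : Type u} {QE : Type u} {AP : Type w} [Fintype Q] [Fintype QE]
    (M : MDP Q AP) (s : Setoid Q) (hcomp : Compatible M s) (ψ : SafeF AP)
    (E : MDP QE AP) (R₀ : QE → Quotient s → Prop)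
    (hmin : MinimalCex (M.abst s) ψ E R₀)
    (R : QE → Q → Prop) (hval : IsCanonSim E M R)
    (hcons : ∀ e q, R e q → R₀ e (Quotient.mk s q)) :
    ∀ e a, R₀ e a ↔ ∃ q, R e q ∧ Quotient.mk s q = a := by
  have hcex : IsCex (M.abst s) ψ E (Relation.Comp R (abstRel s)) :=
    ⟨hmin.1.1, hval.comp (isCanonSim_abstRel hcomp)⟩
  have hsub : ∀ e a, Relation.Comp R (abstRel s) e a → R₀ e a := by
    rintro e _ ⟨q, hq, rfl⟩
    exact hcons e q hq
  rw [← hmin.2.2 _ hcex hsub]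
  exact fun _ _ => Iff.rfl
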